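/- arXiv:1101.0992 — 5 statements merged into one kernel-verified Lean document; each statement's English description precedes it below -/
import Mathlib

section
/- Let h : [X, ∞) → ℝ be a positive C² function with h(r) → 0 and h'(r) → 0 as r → ∞, satisfying the differential inequality h''(r) + (N-2)/r · h'(r) ≥ (1-η)·h(r) for all r > X, where 0 < η < 1, N ≥ 2, and X > 0. Then h'(r) + √(1-η)·h(r) ≤ 0 for all r > X; in particular there is a constant C > 0 such that h(r) ≤ C·exp(-√(1-η)·r) for all r ≥ X. -/
/-!
Multiplying the inequality by the integrating factor `r ^ (N - 2)` shows that `r ^ (N - 2) h'` is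
strictly increasing; so if `h'` were ever nonnegative, `h` would eventually increase, which is
impossible for a positive function tending to `0`. Hence `h' < 0`, and multiplying the inequality by
`h'` shows that the energy `h'² - (1 - η) h²` is nonincreasing. As it tends to `0` it is nonnegative,
i.e. `-h' ≥ √(1 - η) h`, and then `h(r) exp(√(1 - η) r)` is nonincreasing.
-/

open Real Filter Set Topology

section Order

variable {α β : Type*} [SemilatticeSup α] [Nonempty α] [TopologicalSpace β] [Preorder β]
  {f : α → β} {a x : α} {l : β}

theorem MonotoneOn.le_of_tendsto_atTop [ClosedIciTopology β] (hf : MonotoneOn f (Ici a))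
    (hl : Tendsto f atTop (𝓝 l)) (hx : a ≤ x) : f x ≤ l :=
  ge_of_tendsto hl <| by
    filter_upwards [eventually_ge_atTop x] with y hy
    exact hf hx (hx.trans hy) hy

theorem AntitoneOn.le_of_tendsto_atTop [ClosedIicTopology β] (hf : AntitoneOn f (Ici a))
    (hl : Tendsto f atTop (𝓝 l)) (hx : a ≤ x) : l ≤ f x :=
  le_of_tendsto hl <| by
    filter_upwards [eventually_ge_atTop x] with y hy
    exact hf hx (hx.trans hy) hy

end Order

theorem hasDerivAt_rpow_mul {f : ℝ → ℝ} {r : ℝ} (k : ℝ) (hr : 0 < r)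
    (hf : DifferentiableAt ℝ f r) :
    HasDerivAt (fun x ↦ x ^ k * f x) (r ^ k * (deriv f r + k / r * f r)) r :=
  ((hasDerivAt_rpow_const (Or.inl hr.ne')).mul hf.hasDerivAt).congr_deriv <| by
    rw [rpow_sub_one hr.ne']
    ring

section RadialInequality

variable {h : ℝ → ℝ} {X k c : ℝ}

theorem deriv_neg_of_radial_ineq (hX : 0 < X) (hd : Differentiable ℝ h)
    (hd2 : Differentiable ℝ (deriv h)) (hpos : ∀ r, X < r → 0 < h r)
    (hlim : Tendsto h atTop (𝓝 0))
    (hineq : ∀ r, X < r → 0 < deriv (deriv h) r + k / r * deriv h r) {r : ℝ} (hr : X < r) :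
    deriv h r < 0 := by
  by_contra! hr₀
  have hu : ∀ x, X < x → HasDerivAt (fun x ↦ x ^ k * deriv h x)
      (x ^ k * (deriv (deriv h) x + k / x * deriv h x)) x :=
    fun x hx ↦ hasDerivAt_rpow_mul k (hX.trans hx) (hd2 x)
  have hu_mono : StrictMonoOn (fun x ↦ x ^ k * deriv h x) (Ici r) := by
    refine strictMonoOn_of_deriv_pos (convex_Ici r)
      (fun x hx ↦ (hu x (hr.trans_le hx)).continuousAt.continuousWithinAt) fun x hx ↦ ?_
    rw [interior_Ici] at hx
    have hXx : X < x := hr.trans hx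
    rw [(hu x hXx).deriv]
    exact mul_pos (rpow_pos_of_pos (hX.trans hXx) k) (hineq x hXx)
  have hderiv_pos : ∀ x ∈ Ioi r, 0 < deriv h x := fun x hx ↦
    pos_of_mul_pos_right
      ((mul_nonneg (rpow_nonneg (hX.trans hr).le k) hr₀).trans_lt
        (hu_mono self_mem_Ici (mem_Ici.2 (le_of_lt hx)) hx))
      (rpow_nonneg (hX.trans (hr.trans hx)).le k)
  have h_mono : MonotoneOn h (Ici r) :=
    monotoneOn_of_deriv_nonneg (convex_Ici r) hd.continuous.continuousOn
      hd.differentiableOn (by rw [interior_Ici]; exact fun x hx ↦ (hderiv_pos x hx).le)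
  exact (hpos r hr).not_ge (h_mono.le_of_tendsto_atTop hlim le_rfl)

theorem antitoneOn_energy (hX : 0 ≤ X) (hk : 0 ≤ k) (hd : Differentiable ℝ h)
    (hd2 : Differentiable ℝ (deriv h)) (hneg : ∀ r, X < r → deriv h r ≤ 0)
    (hineq : ∀ r, X < r → c ^ 2 * h r ≤ deriv (deriv h) r + k / r * deriv h r) :
    AntitoneOn (fun r ↦ deriv h r ^ 2 - c ^ 2 * h r ^ 2) (Ici X) := by
  have hE : ∀ r, HasDerivAt (fun r ↦ deriv h r ^ 2 - c ^ 2 * h r ^ 2)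
      (2 * deriv h r * (deriv (deriv h) r - c ^ 2 * h r)) r := fun r ↦
    (((hd2 r).hasDerivAt.pow 2).sub (((hd r).hasDerivAt.pow 2).const_mul (c ^ 2))).congr_deriv
      (by push_cast; ring)
  refine antitoneOn_of_deriv_nonpos (convex_Ici X)
    (continuous_iff_continuousAt.2 fun r ↦ (hE r).continuousAt).continuousOn
    (fun r _ ↦ (hE r).differentiableAt.differentiableWithinAt) fun r hr ↦ ?_
  rw [interior_Ici] at hr
  rw [(hE r).deriv]
  have hkr : 0 ≤ k / r := div_nonneg hk (hX.trans_lt hr).le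
  -- `h'' - c² h ≥ -(k / r) h'` and `h' ≤ 0` give `E' ≤ -2 (k / r) h'² ≤ 0`.
  nlinarith [hneg r hr, hineq r hr, mul_nonneg hkr (sq_nonneg (deriv h r)),
    mul_nonneg (neg_nonneg.2 (hneg r hr)) (sub_nonneg.2 (hineq r hr))]

theorem le_mul_exp_of_deriv_add_mul_nonpos (hd : Differentiable ℝ h)
    (hineq : ∀ r, X < r → deriv h r + c * h r ≤ 0) {r : ℝ} (hr : X ≤ r) :
    h r ≤ h X * exp (c * X) * exp (-c * r) := by
  have hg : ∀ r, HasDerivAt (fun r ↦ h r * exp (c * r))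
      ((deriv h r + c * h r) * exp (c * r)) r := fun r ↦
    ((hd r).hasDerivAt.mul ((hasDerivAt_id' r).const_mul c).exp).congr_deriv (by ring)
  have hg_anti : AntitoneOn (fun r ↦ h r * exp (c * r)) (Ici X) :=
    antitoneOn_of_deriv_nonpos (convex_Ici X)
      (continuous_iff_continuousAt.2 fun r ↦ (hg r).continuousAt).continuousOn
      (fun r _ ↦ (hg r).differentiableAt.differentiableWithinAt) fun r hr ↦ by
        rw [interior_Ici] at hr
        rw [(hg r).deriv]
        exact mul_nonpos_of_nonpos_of_nonneg (hineq r hr) (exp_pos _).le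
  calc h r = h r * exp (c * r) * exp (-c * r) := by
        rw [mul_assoc, ← exp_add, neg_mul, add_neg_cancel, exp_zero, mul_one]
    _ ≤ h X * exp (c * X) * exp (-c * r) :=
        mul_le_mul_of_nonneg_right (hg_anti self_mem_Ici (mem_Ici.2 hr) hr) (exp_pos _).le

end RadialInequality

theorem stmt1 (N : ℕ) (hN : 2 ≤ N) (η X : ℝ) (hη : 0 < η ∧ η < 1) (hX : 0 < X)
    (h : ℝ → ℝ) (hC2 : ContDiff ℝ 2 h) (hpos : ∀ r, X ≤ r → 0 < h r)
    (hlim : Tendsto h atTop (nhds 0)) (hlim' : Tendsto (deriv h) atTop (nhds 0))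
    (hineq : ∀ r, X < r →
      deriv (deriv h) r + ((N : ℝ) - 2) / r * deriv h r ≥ (1 - η) * h r) :
    (∀ r, X < r → deriv h r + Real.sqrt (1 - η) * h r ≤ 0) ∧
    ∃ C > 0, ∀ r, X ≤ r → h r ≤ C * Real.exp (-Real.sqrt (1 - η) * r) := by
  set c := √(1 - η)
  have hc2 : c ^ 2 = 1 - η := sq_sqrt (by linarith [hη.2])
  have hc : 0 < c := sqrt_pos.2 (by linarith [hη.2])
  have hk : (0 : ℝ) ≤ N - 2 := by
    have : (2 : ℝ) ≤ N := by exact_mod_cast hN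
    linarith
  have hd : Differentiable ℝ h := hC2.differentiable (by norm_num)
  have hd2 : Differentiable ℝ (deriv h) := hC2.differentiable_deriv_two
  have hneg : ∀ r, X < r → deriv h r < 0 := fun r ↦
    deriv_neg_of_radial_ineq hX hd hd2 (fun r hr ↦ hpos r hr.le) hlim
      (fun r hr ↦ (mul_pos (by linarith [hη.2]) (hpos r hr.le)).trans_le (hineq r hr))
  have hE_anti := antitoneOn_energy (c := c) hX.le hk hd hd2 (fun r hr ↦ (hneg r hr).le)
    (fun r hr ↦ hc2 ▸ hineq r hr)
  have hE_lim : Tendsto (fun r ↦ deriv h r ^ 2 - c ^ 2 * h r ^ 2) atTop (𝓝 0) := by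
    simpa using (hlim'.pow 2).sub ((hlim.pow 2).const_mul (c ^ 2))
  have hfirst : ∀ r, X < r → deriv h r + c * h r ≤ 0 := fun r hr ↦ by
    have hE := hE_anti.le_of_tendsto_atTop hE_lim hr.le
    have : c * h r ≤ -deriv h r :=
      (sq_le_sq₀ (mul_pos hc (hpos r hr.le)).le (neg_nonneg.2 (hneg r hr).le)).1
        (by rw [mul_pow, neg_sq]; linarith)
    linarith
  exact ⟨hfirst, h X * exp (c * X), mul_pos (hpos X le_rfl) (exp_pos _),
    fun r hr ↦ le_mul_exp_of_deriv_add_mul_nonpos hd hfirst hr⟩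
end

section
/- Let n ≥ 1 and let g : (0,∞) → ℝ satisfy 0 < g(r) ≤ C·e^{-r}·(1+r)^{(n-3)/2}/r^{n-2} for all r > 0 (with g(r) = e^{-r}/2 when n = 1). Then for every η ∈ (0,1) there is a constant C' > 0 such that for all x ∈ ℝⁿ, ∫_{ℝⁿ} g(‖y - x‖)·e^{-η‖y‖} dy ≤ C'·e^{-η‖x‖}. -/
/-!
Since `‖x‖ ≤ ‖y‖ + ‖y - x‖`, the weight `e^{-η‖y‖}` is at most `e^{-η‖x‖} e^{η‖y - x‖}`, so after
translating by `x` the integral is at most `e^{-η‖x‖} ∫ g(‖z‖) e^{η‖z‖} dz`. This integral is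
finite: in polar coordinates the bound on `g` gives the radial density
`r^{n-1} g(r) e^{ηr} ≤ C r (1 + r)^{(n-3)/2} e^{-(1-η)r}`, and the exponential beats any power.
-/

open Real MeasureTheory Filter Asymptotics Set

section
variable {E : Type*} [NormedAddCommGroup E] [MeasurableSpace E] [MeasurableAdd E]
  {μ : Measure E} [μ.IsAddRightInvariant]

lemma integral_comp_sub_mul_exp_neg_le {f k : E → ℝ} {η : ℝ} (hη : 0 ≤ η)
    (hfk : ∀ᵐ z ∂μ, 0 ≤ f z ∧ f z ≤ k z) (hk : Integrable (fun z => k z * exp (η * ‖z‖)) μ)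
    (x : E) :
    ∫ y, f (y - x) * exp (-η * ‖y‖) ∂μ ≤ (∫ z, k z * exp (η * ‖z‖) ∂μ) * exp (-η * ‖x‖) := by
  have hfk_x : ∀ᵐ y ∂μ, 0 ≤ f (y - x) ∧ f (y - x) ≤ k (y - x) :=
    (measurePreserving_sub_right μ x).quasiMeasurePreserving.ae hfk
  have hweight (y : E) : exp (-η * ‖y‖) ≤ exp (η * ‖y - x‖) * exp (-η * ‖x‖) := by
    rw [← exp_add, exp_le_exp]
    nlinarith [norm_sub_norm_le x y, norm_sub_rev x y]
  calc ∫ y, f (y - x) * exp (-η * ‖y‖) ∂μ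
      ≤ ∫ y, k (y - x) * exp (η * ‖y - x‖) * exp (-η * ‖x‖) ∂μ := by
        -- `f` need not be measurable: a non-integrable left side has integral `0`.
        refine integral_mono_of_nonneg ?_ ((hk.comp_sub_right x).mul_const _) ?_
        · filter_upwards [hfk_x] with y hy using mul_nonneg hy.1 (exp_nonneg _)
        · filter_upwards [hfk_x] with y hy
          rw [mul_assoc]
          exact mul_le_mul hy.2 (hweight y) (exp_nonneg _) (hy.1.trans hy.2)
    _ = (∫ z, k z * exp (η * ‖z‖) ∂μ) * exp (-η * ‖x‖) := by
        rw [integral_mul_const, integral_sub_right_eq_self (fun z => k z * exp (η * ‖z‖)) x]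
end

lemma integrableOn_one_add_rpow_mul_exp_neg (s : ℝ) {c : ℝ} (hc : 0 < c) :
    IntegrableOn (fun r : ℝ => (1 + r) ^ s * exp (-c * r)) (Ioi 0) := by
  have hcont : ContinuousOn (fun r : ℝ => (1 + r) ^ s * exp (-c * r)) (Ici 0) := by
    intro r (hr : 0 ≤ r)
    have hr1 : 1 + r ≠ 0 := by positivity
    exact (((continuousAt_const.add continuousAt_id).rpow_const (.inl hr1)).mul
      (by fun_prop)).continuousWithinAt
  refine integrable_of_isBigO_exp_neg (half_pos hc) hcont ?_
  have hpow : (fun r : ℝ => (1 + r) ^ s) =O[atTop] fun r => exp (c / 2 * r) := by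
    have := (isLittleO_rpow_exp_pos_mul_atTop s (half_pos hc)).isBigO.comp_tendsto
      (tendsto_atTop_add_const_left atTop 1 tendsto_id)
    refine this.trans (isBigO_of_le' (c := exp (c / 2)) atTop fun r => ?_)
    simp [← exp_add, mul_add, add_comm]
  calc (fun r : ℝ => (1 + r) ^ s * exp (-c * r))
      =O[atTop] fun r => exp (c / 2 * r) * exp (-c * r) := hpow.mul (isBigO_refl _ _)
    _ = fun r => exp (-(c / 2) * r) := by ext r; rw [← exp_add]; ring_nf

lemma integrableOn_mul_one_add_rpow_mul_exp_neg (s : ℝ) {c : ℝ} (hc : 0 < c) :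
    IntegrableOn (fun r : ℝ => r * (1 + r) ^ s * exp (-c * r)) (Ioi 0) := by
  refine (integrableOn_one_add_rpow_mul_exp_neg (s + 1) hc).mono' (by fun_prop) ?_
  filter_upwards [ae_restrict_mem measurableSet_Ioi] with r (hr : 0 < r)
  rw [rpow_add_one (by positivity), Real.norm_of_nonneg (by positivity), mul_comm ((1 + r) ^ s)]
  gcongr
  linarith

noncomputable def besselDecayBound (n : ℕ) (C r : ℝ) : ℝ :=
  C * exp (-r) * (1 + r) ^ (((n : ℝ) - 3) / 2) / r ^ ((n : ℝ) - 2)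

lemma pow_mul_besselDecayBound_mul_exp {n : ℕ} (hn : 1 ≤ n) (C η : ℝ) {r : ℝ} (hr : 0 < r) :
    r ^ (n - 1) * (besselDecayBound n C r * exp (η * r)) =
      C * (r * (1 + r) ^ (((n : ℝ) - 3) / 2) * exp (-(1 - η) * r)) := by
  have hpow : r ^ (n - 1) = r ^ ((n : ℝ) - 2) * r := by
    rw [← rpow_add_one hr.ne', ← rpow_natCast, Nat.cast_sub hn]
    ring_nf
  have hexp : exp (-(1 - η) * r) = exp (-r) * exp (η * r) := by
    rw [← exp_add]; ring_nf
  rw [besselDecayBound, hpow, hexp]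
  field_simp

section
variable {E : Type*} [NormedAddCommGroup E] [NormedSpace ℝ E] [FiniteDimensional ℝ E]
  [Nontrivial E] [MeasurableSpace E] [BorelSpace E] (μ : Measure E) [μ.IsAddHaarMeasure]

lemma integrable_besselDecayBound_norm_mul_exp (C : ℝ) {η : ℝ} (hη : η < 1) :
    Integrable (fun z : E => besselDecayBound (Module.finrank ℝ E) C ‖z‖ * exp (η * ‖z‖)) μ := by
  rw [integrable_fun_norm_addHaar μ (f := fun r => besselDecayBound _ C r * exp (η * r))]
  refine IntegrableOn.congr_fun
    ((integrableOn_mul_one_add_rpow_mul_exp_neg (((Module.finrank ℝ E : ℝ) - 3) / 2)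
      (sub_pos.2 hη)).const_mul C)
    (fun r (hr : 0 < r) => ?_) measurableSet_Ioi
  rw [smul_eq_mul, pow_mul_besselDecayBound_mul_exp Module.finrank_pos C η hr]
end

theorem stmt2_general (n : ℕ) (hn : 1 ≤ n) (C : ℝ) (g : ℝ → ℝ)
    (hg : ∀ r : ℝ, 0 < r → 0 < g r ∧
      g r ≤ C * Real.exp (-r) * (1 + r) ^ (((n : ℝ) - 3) / 2) / r ^ ((n : ℝ) - 2)) :
    ∀ η : ℝ, 0 < η → η < 1 → ∃ C' > 0, ∀ x : EuclideanSpace ℝ (Fin n),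
      ∫ y : EuclideanSpace ℝ (Fin n), g ‖y - x‖ * Real.exp (-η * ‖y‖) ≤
        C' * Real.exp (-η * ‖x‖) := by
  intro η hη0 hη1
  have : Nontrivial (EuclideanSpace ℝ (Fin n)) :=
    Module.nontrivial_of_finrank_pos (R := ℝ) (by rwa [finrank_euclideanSpace_fin])
  have hk := integrable_besselDecayBound_norm_mul_exp
    (volume : Measure (EuclideanSpace ℝ (Fin n))) C hη1
  rw [finrank_euclideanSpace_fin] at hk
  have hgk : ∀ᵐ z : EuclideanSpace ℝ (Fin n),
      0 ≤ g ‖z‖ ∧ g ‖z‖ ≤ besselDecayBound n C ‖z‖ := by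
    filter_upwards [Measure.ae_ne volume 0] with z hz
    exact (hg ‖z‖ (norm_pos_iff.2 hz)).imp_left le_of_lt
  refine ⟨max (∫ z : EuclideanSpace ℝ (Fin n), besselDecayBound n C ‖z‖ * exp (η * ‖z‖)) 1,
    lt_max_of_lt_right one_pos, fun x => ?_⟩
  grw [integral_comp_sub_mul_exp_neg_le hη0.le hgk hk x, ← le_max_left]

theorem stmt2 (n : ℕ) (hn : 1 ≤ n) (C : ℝ) (hC : 0 < C) (g : ℝ → ℝ)
    (hg : ∀ r : ℝ, 0 < r → 0 < g r ∧
      g r ≤ C * Real.exp (-r) * (1 + r) ^ (((n : ℝ) - 3) / 2) / r ^ ((n : ℝ) - 2))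
    (hg1 : n = 1 → ∀ r : ℝ, 0 < r → g r = Real.exp (-r) / 2) :
    ∀ η : ℝ, 0 < η → η < 1 → ∃ C' > 0, ∀ x : EuclideanSpace ℝ (Fin n),
      ∫ y : EuclideanSpace ℝ (Fin n), g ‖y - x‖ * Real.exp (-η * ‖y‖) ≤
        C' * Real.exp (-η * ‖x‖) :=
  stmt2_general n hn C g hg
end

section
/- Let n = N - 1 ≥ 1 and let g : (0,∞) → ℝ satisfy 0 < g(r) ≤ C·e^{-r}·(1+r)^{(n-3)/2}/r^{n-2} for r > 0 (with g(r) = e^{-r}/2 when n = 1). Then for every b > 1 there is a constant C' > 0 such that for all x ∈ ℝⁿ with ‖x‖ ≥ 1, ∫_{ℝⁿ} g(‖y - x‖)·e^{-b‖y‖} dy ≤ C'·‖x‖^{(2-N)/2}·e^{-‖x‖}. -/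
/-!
Write `r = ‖y - x‖` and `c = b - 1`. Since `‖x‖ ≤ r + ‖y‖`, the integrand is at most
`C e^{-‖x‖} (1 + r)^a r^{2-n} e^{-c‖y‖}` with `a = (n - 3) / 2`. On the ball `r < ‖x‖ / 2` we have
`‖y‖ > ‖x‖ / 2`, so `e^{-c‖x‖/2}` beats every power of `‖x‖` while the singularity `r^{2-n}`
integrates to `O(‖x‖²)`. Off that ball `(1 + r)^a r^{2-n} ≲ r^{(1-n)/2} ≲ ‖x‖^{(1-n)/2}` and
`e^{-c‖y‖}` is integrable.
-/

open Real MeasureTheory Set Metric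
open scoped Nat

lemma exists_rpow_mul_exp_neg_mul_le (a : ℝ) {c : ℝ} (hc : 0 < c) :
    ∃ B > 0, ∀ R ≥ 1, R ^ a * exp (-(c * R)) ≤ B := by
  set k := ⌈a⌉₊
  refine ⟨k ! / c ^ k, by positivity, fun R hR => ?_⟩
  have hRk : R ^ a ≤ R ^ k := by
    rw [← rpow_natCast]; exact rpow_le_rpow_of_exponent_le hR (Nat.le_ceil a)
  have hexp : (c * R) ^ k / k ! ≤ exp (c * R) := pow_div_factorial_le_exp _ (by positivity) k
  calc R ^ a * exp (-(c * R)) ≤ R ^ k * exp (-(c * R)) := by gcongr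
    _ = (c * R) ^ k / k ! * exp (-(c * R)) * (k ! / c ^ k) := by
        field_simp; ring
    _ ≤ exp (c * R) * exp (-(c * R)) * (k ! / c ^ k) := by gcongr
    _ = k ! / c ^ k := by rw [← exp_add, add_neg_cancel, exp_zero, one_mul]

lemma one_add_rpow_mul_rpow_le {a s r ρ : ℝ} (has : a + s ≤ 0) (hρ : 1 / 2 ≤ ρ) (hρr : ρ ≤ r) :
    (1 + r) ^ a * r ^ s ≤ 3 ^ max a 0 * ρ ^ (a + s) := by
  have hr : 0 < r := by linarith
  have h1r : (1 + r) ^ a ≤ 3 ^ max a 0 * r ^ a := by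
    rcases le_total 0 a with ha | ha
    · rw [max_eq_left ha, ← mul_rpow (by norm_num) hr.le]
      exact rpow_le_rpow (by linarith) (by linarith) ha
    · rw [max_eq_right ha, rpow_zero, one_mul]
      exact rpow_le_rpow_of_nonpos hr (by linarith) ha
  calc (1 + r) ^ a * r ^ s ≤ 3 ^ max a 0 * r ^ a * r ^ s := by gcongr
    _ = 3 ^ max a 0 * r ^ (a + s) := by rw [rpow_add hr]; ring
    _ ≤ 3 ^ max a 0 * ρ ^ (a + s) := by
        gcongr 3 ^ max a 0 * ?_
        exact rpow_le_rpow_of_nonpos (by linarith) hρr has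

lemma one_add_rpow_mul_exp_neg_le {a c r t R : ℝ} (hc : 0 < c) (hR : 1 ≤ R) (hr : 0 ≤ r)
    (hrR : r < R / 2) (hRrt : R ≤ r + t) :
    (1 + r) ^ a * exp (-(c * t)) ≤ (2 * R) ^ max a 0 * exp (-(c * (R / 2))) := by
  gcongr ?_ * exp ?_
  · calc (1 + r) ^ a ≤ (1 + r) ^ max a 0 :=
          rpow_le_rpow_of_exponent_le (by linarith) (le_max_left _ _)
      _ ≤ (2 * R) ^ max a 0 := by gcongr; linarith
  · nlinarith

lemma one_add_rpow_mul_rpow_mul_exp_le {a s c r t R : ℝ} (has : a + s ≤ 0) (hc : 0 < c)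
    (hR : 1 ≤ R) (hr : 0 < r) (hRrt : R ≤ r + t) :
    (1 + r) ^ a * r ^ s * exp (-(c * t)) ≤
      (2 * R) ^ max a 0 * exp (-(c * (R / 2))) * (Iio (R / 2)).indicator (· ^ s) r +
        3 ^ max a 0 * (R / 2) ^ (a + s) * exp (-(c * t)) := by
  by_cases hrR : r < R / 2
  · rw [indicator_of_mem (show r ∈ Iio (R / 2) from hrR)]
    have hnear := one_add_rpow_mul_exp_neg_le (a := a) hc hR hr.le hrR hRrt
    calc (1 + r) ^ a * r ^ s * exp (-(c * t)) = (1 + r) ^ a * exp (-(c * t)) * r ^ s := by ring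
      _ ≤ (2 * R) ^ max a 0 * exp (-(c * (R / 2))) * r ^ s := by gcongr
      _ ≤ _ := le_add_of_nonneg_right (by positivity)
  · rw [indicator_of_notMem (show r ∉ Iio (R / 2) from hrR), mul_zero, zero_add]
    exact mul_le_mul_of_nonneg_right
      (one_add_rpow_mul_rpow_le has (by linarith) (not_lt.mp hrR)) (exp_pos _).le

lemma comp_norm_sub_mul_exp_le {E : Type*} [NormedAddCommGroup E] {g : ℝ → ℝ} {C a s b : ℝ}
    (hC : 0 ≤ C) (hb : 1 < b) (has : a + s ≤ 0)
    (hg : ∀ r, 0 < r → g r ≤ C * exp (-r) * ((1 + r) ^ a * r ^ s)) {x y : E} (hx : 1 ≤ ‖x‖)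
    (hy : y ≠ x) :
    g ‖y - x‖ * exp (-b * ‖y‖) ≤ C * exp (-‖x‖) *
      ((2 * ‖x‖) ^ max a 0 * exp (-((b - 1) * (‖x‖ / 2))) *
          (ball 0 (‖x‖ / 2)).indicator (‖·‖ ^ s) (y - x) +
        3 ^ max a 0 * (‖x‖ / 2) ^ (a + s) * exp (-((b - 1) * ‖y‖))) := by
  set r := ‖y - x‖
  have hr : 0 < r := norm_pos_iff.2 (sub_ne_zero.2 hy)
  have hxr : ‖x‖ ≤ r + ‖y‖ := by
    calc ‖x‖ = ‖y - (y - x)‖ := by rw [sub_sub_cancel]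
      _ ≤ r + ‖y‖ := by rw [add_comm]; exact norm_sub_le _ _
  have hexp : exp (-r) * exp (-b * ‖y‖) = exp (-(r + ‖y‖)) * exp (-((b - 1) * ‖y‖)) := by
    rw [← exp_add, ← exp_add]; ring_nf
  have hball : (ball 0 (‖x‖ / 2)).indicator (‖·‖ ^ s) (y - x) =
      (Iio (‖x‖ / 2)).indicator (· ^ s) r := by
    simp [indicator, r]
  calc g r * exp (-b * ‖y‖) ≤ C * exp (-r) * ((1 + r) ^ a * r ^ s) * exp (-b * ‖y‖) := by
        gcongr; exact hg r hr
    _ = C * exp (-(r + ‖y‖)) * ((1 + r) ^ a * r ^ s * exp (-((b - 1) * ‖y‖))) := by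
        linear_combination C * ((1 + r) ^ a * r ^ s) * hexp
    _ ≤ C * exp (-‖x‖) * ((1 + r) ^ a * r ^ s * exp (-((b - 1) * ‖y‖))) := by gcongr
    _ ≤ _ := by
        rw [hball]
        gcongr
        exact one_add_rpow_mul_rpow_mul_exp_le has (by linarith) hx hr hxr

section Radial

variable {E : Type*} [NormedAddCommGroup E] [NormedSpace ℝ E] [Nontrivial E]
  [FiniteDimensional ℝ E] [MeasurableSpace E] [BorelSpace E] (μ : Measure E) [μ.IsAddHaarMeasure]

lemma integrable_exp_neg_mul_norm {c : ℝ} (hc : 0 < c) :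
    Integrable (fun x : E => exp (-(c * ‖x‖))) μ := by
  rw [integrable_fun_norm_addHaar μ (f := fun t => exp (-(c * t)))]
  have hd : -1 < ((Module.finrank ℝ E - 1 : ℕ) : ℝ) := by
    linarith [(Module.finrank ℝ E - 1).cast_nonneg (α := ℝ)]
  refine (integrableOn_rpow_mul_exp_neg_mul_rpow hd zero_lt_one hc).congr_fun
    (fun t ht => ?_) measurableSet_Ioi
  simp [rpow_natCast]

lemma setIntegral_ball_norm_rpow {s : ℝ} (hs : -(Module.finrank ℝ E : ℝ) < s) {R : ℝ}
    (hR : 0 ≤ R) :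
    ∫ x in ball (0 : E) R, ‖x‖ ^ s ∂μ =
      Module.finrank ℝ E * μ.real (ball 0 1) * (R ^ (s + Module.finrank ℝ E) /
        (s + Module.finrank ℝ E)) := by
  set d := Module.finrank ℝ E
  have hd : 1 ≤ d := Module.finrank_pos
  have hball :
      (ball (0 : E) R).indicator (‖·‖ ^ s) = fun x => (Iio R).indicator (· ^ s) ‖x‖ := by
    ext x; simp [indicator]
  have hradial : ∫ t in Ioi (0 : ℝ), t ^ (d - 1) • (Iio R).indicator (· ^ s) t =
      ∫ t in (0 : ℝ)..R, t ^ (s + d - 1) := by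
    rw [intervalIntegral.integral_of_le hR, integral_Ioc_eq_integral_Ioo,
      ← integral_indicator measurableSet_Ioi, ← integral_indicator measurableSet_Ioo]
    congr 1 with t
    by_cases ht : 0 < t
    · by_cases htR : t < R
      · rw [indicator_of_mem (show t ∈ Ioi 0 from ht), indicator_of_mem (show t ∈ Iio R from htR),
          indicator_of_mem (show t ∈ Ioo 0 R from ⟨ht, htR⟩), smul_eq_mul, ← rpow_natCast,
          ← rpow_add ht, Nat.cast_sub hd]
        ring_nf
      · simp [ht, htR, indicator]
    · simp [ht, indicator]
  rw [← integral_indicator measurableSet_ball, hball, integral_fun_norm_addHaar, hradial,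
    integral_rpow (Or.inl (by linarith)), sub_add_cancel, zero_rpow (by linarith), sub_zero,
    nsmul_eq_mul, smul_eq_mul, mul_assoc]

theorem integral_comp_norm_sub_mul_exp_le {g : ℝ → ℝ} {C a s b : ℝ} (hC : 0 ≤ C) (hb : 1 < b)
    (has : a + s ≤ 0) (hs : -(Module.finrank ℝ E : ℝ) < s) (hg₀ : ∀ r, 0 < r → 0 ≤ g r)
    (hg : ∀ r, 0 < r → g r ≤ C * exp (-r) * ((1 + r) ^ a * r ^ s)) {x : E} (hx : 1 ≤ ‖x‖) :
    ∫ y, g ‖y - x‖ * exp (-b * ‖y‖) ∂μ ≤ C * exp (-‖x‖) *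
      ((2 * ‖x‖) ^ max a 0 * exp (-((b - 1) * (‖x‖ / 2))) *
          (Module.finrank ℝ E * μ.real (ball 0 1) *
            ((‖x‖ / 2) ^ (s + Module.finrank ℝ E) / (s + Module.finrank ℝ E))) +
        3 ^ max a 0 * (‖x‖ / 2) ^ (a + s) * ∫ y, exp (-((b - 1) * ‖y‖)) ∂μ) := by
  have hc : 0 < b - 1 := by linarith
  have hae : ∀ᵐ y ∂μ, y ≠ x := by
    rw [ae_iff]; simp
  have hk : Integrable ((ball (0 : E) (‖x‖ / 2)).indicator (‖·‖ ^ s)) μ := by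
    refine (integrableOn_ball_of_norm_le_rpow (C := 1) (α := -s) Module.finrank_pos
      (by linarith) (.of_forall fun z => ?_)
      (measurable_norm.pow_const s).aestronglyMeasurable).integrable_indicator measurableSet_ball
    rw [norm_of_nonneg (by positivity), one_mul, neg_neg]
  have hk' := (hk.comp_sub_right x).const_mul
    ((2 * ‖x‖) ^ max a 0 * exp (-((b - 1) * (‖x‖ / 2))))
  have hJ := (integrable_exp_neg_mul_norm μ hc).const_mul (3 ^ max a 0 * (‖x‖ / 2) ^ (a + s))
  calc ∫ y, g ‖y - x‖ * exp (-b * ‖y‖) ∂μ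
      ≤ ∫ y, C * exp (-‖x‖) *
          ((2 * ‖x‖) ^ max a 0 * exp (-((b - 1) * (‖x‖ / 2))) *
              (ball 0 (‖x‖ / 2)).indicator (‖·‖ ^ s) (y - x) +
            3 ^ max a 0 * (‖x‖ / 2) ^ (a + s) * exp (-((b - 1) * ‖y‖))) ∂μ := by
        refine integral_mono_of_nonneg ?_ ((hk'.add hJ).const_mul _)
          (hae.mono fun y hy => comp_norm_sub_mul_exp_le hC hb has hg hx hy)
        filter_upwards [hae] with y hy
        exact mul_nonneg (hg₀ _ (norm_pos_iff.2 (sub_ne_zero.2 hy))) (exp_pos _).le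
    _ = _ := by
        rw [integral_const_mul, integral_add hk' hJ, integral_const_mul, integral_const_mul,
          integral_sub_right_eq_self (fun z => (ball (0 : E) (‖x‖ / 2)).indicator (‖·‖ ^ s) z) x,
          integral_indicator measurableSet_ball, setIntegral_ball_norm_rpow μ hs (by positivity)]

theorem exists_integral_comp_norm_sub_mul_exp_le {C b : ℝ} (hC : 0 < C) (hb : 1 < b)
    {g : ℝ → ℝ} (hg : ∀ r, 0 < r → 0 ≤ g r ∧ g r ≤
      C * exp (-r) * (1 + r) ^ (((Module.finrank ℝ E : ℝ) - 3) / 2) /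
        r ^ ((Module.finrank ℝ E : ℝ) - 2)) :
    ∃ C' > 0, ∀ x : E, 1 ≤ ‖x‖ → ∫ y, g ‖y - x‖ * exp (-b * ‖y‖) ∂μ ≤
      C' * ‖x‖ ^ ((1 - (Module.finrank ℝ E : ℝ)) / 2) * exp (-‖x‖) := by
  set d := Module.finrank ℝ E
  have hd : (1 : ℝ) ≤ d := by exact_mod_cast Module.finrank_pos
  set a := ((d : ℝ) - 3) / 2
  set s := 2 - (d : ℝ)
  have has : a + s = (1 - d) / 2 := by ring
  have hsd : s + d = 2 := by ring
  have hg' : ∀ r, 0 < r → g r ≤ C * exp (-r) * ((1 + r) ^ a * r ^ s) := fun r hr => by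
    rw [show s = -((d : ℝ) - 2) by ring, rpow_neg hr.le, ← mul_assoc, ← div_eq_mul_inv]
    exact (hg r hr).2
  set c := b - 1
  have hc : 0 < c := by linarith
  obtain ⟨B, hB, hBle⟩ := exists_rpow_mul_exp_neg_mul_le (max a 0 + 2 - (a + s)) (half_pos hc)
  set V := μ.real (ball (0 : E) 1)
  have hV : 0 < V :=
    ENNReal.toReal_pos (measure_ball_pos μ 0 one_pos).ne' measure_ball_lt_top.ne
  set J := ∫ y, exp (-(c * ‖y‖)) ∂μ
  have hJ : 0 ≤ J := integral_nonneg fun y => (exp_pos _).le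
  refine ⟨C * (2 ^ max a 0 * (d * V / 8) * B + 3 ^ max a 0 * (1 / 2) ^ (a + s) * J),
    by positivity, fun x hx => ?_⟩
  set R := ‖x‖
  have hR : 0 < R := by linarith
  have hnear : (2 * R) ^ max a 0 * exp (-(c * (R / 2))) * (d * V * ((R / 2) ^ (s + d) / (s + d)))
      ≤ 2 ^ max a 0 * (d * V / 8) * B * R ^ (a + s) := by
    have hsplit : R ^ max a 0 * R ^ 2 = R ^ (max a 0 + 2 - (a + s)) * R ^ (a + s) := by
      rw [← rpow_add hR, ← rpow_two, ← rpow_add hR]; ring_nf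
    have hcR : c * (R / 2) = c / 2 * R := by ring
    calc (2 * R) ^ max a 0 * exp (-(c * (R / 2))) * (d * V * ((R / 2) ^ (s + d) / (s + d)))
        = 2 ^ max a 0 * (d * V / 8) * (R ^ (max a 0 + 2 - (a + s)) * exp (-(c / 2 * R))) *
            R ^ (a + s) := by
          rw [hsd, rpow_two, mul_rpow zero_le_two hR.le, hcR]
          linear_combination (2 ^ max a 0 * (d * V / 8) * exp (-(c / 2 * R))) * hsplit
      _ ≤ 2 ^ max a 0 * (d * V / 8) * B * R ^ (a + s) := by gcongr; exact hBle R hx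
  have hfar : (R / 2) ^ (a + s) = (1 / 2) ^ (a + s) * R ^ (a + s) := by
    rw [div_eq_inv_mul, mul_rpow (by norm_num) hR.le, one_div]
  rw [← has]
  calc ∫ y, g ‖y - x‖ * exp (-b * ‖y‖) ∂μ
      ≤ C * exp (-R) * ((2 * R) ^ max a 0 * exp (-(c * (R / 2))) *
          (d * V * ((R / 2) ^ (s + d) / (s + d))) + 3 ^ max a 0 * (R / 2) ^ (a + s) * J) :=
        integral_comp_norm_sub_mul_exp_le μ hC.le hb (by linarith) (by linarith)
          (fun r hr => (hg r hr).1) hg' hx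
    _ ≤ C * exp (-R) * (2 ^ max a 0 * (d * V / 8) * B * R ^ (a + s) +
          3 ^ max a 0 * (R / 2) ^ (a + s) * J) := by gcongr
    _ = _ := by rw [hfar]; ring

end Radial

theorem stmt3_general (N : ℕ) (hN : 2 ≤ N) (n : ℕ) (hn : n = N - 1) (C : ℝ) (hC : 0 < C)
    (g : ℝ → ℝ)
    (hg : ∀ r : ℝ, 0 < r → 0 < g r ∧
      g r ≤ C * Real.exp (-r) * (1 + r) ^ (((n : ℝ) - 3) / 2) / r ^ ((n : ℝ) - 2)) :
    ∀ b : ℝ, 1 < b → ∃ C' > 0, ∀ x : EuclideanSpace ℝ (Fin n), 1 ≤ ‖x‖ →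
      ∫ y : EuclideanSpace ℝ (Fin n), g ‖y - x‖ * Real.exp (-b * ‖y‖) ≤
        C' * ‖x‖ ^ ((2 - (N : ℝ)) / 2) * Real.exp (-‖x‖) := by
  intro b hb
  have : Nontrivial (EuclideanSpace ℝ (Fin n)) :=
    Module.nontrivial_of_finrank_pos (R := ℝ) (by rw [finrank_euclideanSpace_fin]; omega)
  have hexp : (2 - (N : ℝ)) / 2 = (1 - (n : ℝ)) / 2 := by
    subst hn; push_cast [Nat.cast_sub (by omega : 1 ≤ N)]; ring
  have hg' : ∀ r : ℝ, 0 < r → 0 ≤ g r ∧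
      g r ≤ C * exp (-r) * (1 + r) ^ (((n : ℝ) - 3) / 2) / r ^ ((n : ℝ) - 2) :=
    fun r hr => ⟨(hg r hr).1.le, (hg r hr).2⟩
  obtain ⟨C', hC', hbound⟩ := exists_integral_comp_norm_sub_mul_exp_le
    (E := EuclideanSpace ℝ (Fin n)) volume hC hb (by rwa [finrank_euclideanSpace_fin])
  rw [finrank_euclideanSpace_fin] at hbound
  exact ⟨C', hC', fun x hx => hexp ▸ hbound x hx⟩

theorem stmt3 (N : ℕ) (hN : 2 ≤ N) (n : ℕ) (hn : n = N - 1) (C : ℝ) (hC : 0 < C)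
    (g : ℝ → ℝ)
    (hg : ∀ r : ℝ, 0 < r → 0 < g r ∧
      g r ≤ C * Real.exp (-r) * (1 + r) ^ (((n : ℝ) - 3) / 2) / r ^ ((n : ℝ) - 2))
    (hg1 : n = 1 → ∀ r : ℝ, 0 < r → g r = Real.exp (-r) / 2) :
    ∀ b : ℝ, 1 < b → ∃ C' > 0, ∀ x : EuclideanSpace ℝ (Fin n), 1 ≤ ‖x‖ →
      ∫ y : EuclideanSpace ℝ (Fin n), g ‖y - x‖ * Real.exp (-b * ‖y‖) ≤
        C' * ‖x‖ ^ ((2 - (N : ℝ)) / 2) * Real.exp (-‖x‖) :=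
  stmt3_general N hN n hn C hC g hg
end

section
/- Let p > 1 and let z : ℝ → ℝ be a bounded, positive, nonconstant C² solution of z'' = z - z^p which is periodic. Then z - 1 has infinitely many zeros; moreover z attains values both strictly above and strictly below 1. -/
open Real

/-
If z ≤ 1 everywhere then z'' = z - z^p ≥ 0, so z' is monotone; being also periodic, z' is
constant, and since z itself is periodic that constant is 0, contradicting that z is not constant.
The case z ≥ 1 is symmetric. So z crosses 1, and by periodicity it does so infinitely often.
-/

namespace Function.Periodic

variable {f : ℝ → ℝ} {T : ℝ}

theorem deriv (hf : Periodic f T) : Periodic (_root_.deriv f) T := fun x => by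
  rw [← deriv_comp_add_const, show (fun y => f (y + T)) = f from funext hf]

theorem eq_of_monotone (hf : Periodic f T) (hT : 0 < T) (hmono : Monotone f) (s t : ℝ) :
    f s = f t := by
  have le_of_periodic : ∀ a b, f a ≤ f b := fun a b => by
    obtain ⟨n, hn⟩ := exists_nat_ge ((a - b) / T)
    have hshift : a - n * T ≤ b := by linarith [(div_le_iff₀ hT).mp hn]
    calc f a = f (a - n * T) := (hf.sub_nat_mul_eq n).symm
      _ ≤ f b := hmono hshift
  exact le_antisymm (le_of_periodic s t) (le_of_periodic t s)

theorem exists_eq_const_of_monotone_deriv (hf : Periodic f T) (hT : 0 < T)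
    (hdiff : Differentiable ℝ f) (hmono : Monotone (_root_.deriv f)) : ∃ k, ∀ t, f t = k := by
  -- Rolle's theorem on one period supplies a critical point.
  obtain ⟨c, -, hc⟩ :=
    exists_deriv_eq_zero hT hdiff.continuous.continuousOn (by simpa using (hf 0).symm)
  have hderiv_zero : ∀ t, _root_.deriv f t = 0 := fun t => by
    rw [hf.deriv.eq_of_monotone hT hmono t c, hc]
  exact ⟨f 0, fun t => is_const_of_deriv_eq_zero hdiff hderiv_zero t 0⟩

theorem exists_eq_const_of_antitone_deriv (hf : Periodic f T) (hT : 0 < T)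
    (hdiff : Differentiable ℝ f) (hanti : Antitone (_root_.deriv f)) : ∃ k, ∀ t, f t = k := by
  have hneg_mono : Monotone (_root_.deriv (-f)) := by
    rw [deriv.neg']
    exact hanti.neg
  obtain ⟨k, hk⟩ := (hf.comp Neg.neg).exists_eq_const_of_monotone_deriv hT hdiff.neg hneg_mono
  exact ⟨-k, fun t => neg_eq_iff_eq_neg.mp (hk t)⟩

theorem infinite_setOf_eq (hf : Periodic f T) (hT : T ≠ 0) {c : ℝ} :
    {t | f t = f c}.Infinite :=
  Set.infinite_of_injective_forall_mem (f := fun n : ℕ => c + n * T)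
    ((add_right_injective c).comp ((mul_left_injective₀ hT).comp Nat.cast_injective))
    fun n => hf.nat_mul n c

end Function.Periodic

theorem stmt9_general (p : ℝ) (hp : 1 < p) (z : ℝ → ℝ) (hC2 : ContDiff ℝ 2 z)
    (hpos : ∀ t, 0 < z t)
    (hnonconst : ¬ ∃ k, ∀ t, z t = k)
    (hper : ∃ T > 0, Function.Periodic z T)
    (hode : ∀ t, deriv (deriv z) t = z t - z t ^ p) :
    {t : ℝ | z t = 1}.Infinite ∧ (∃ t, 1 < z t) ∧ (∃ t, z t < 1) := by
  obtain ⟨T, hT, hperz⟩ := hper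
  have hdiff : Differentiable ℝ z := hC2.differentiable (by norm_num)
  have hdiff' : Differentiable ℝ (deriv z) := (hC2.deriv' (n := 1)).differentiable one_ne_zero
  have habove : ∃ t, 1 < z t := by
    by_contra! hle
    refine hnonconst (hperz.exists_eq_const_of_monotone_deriv hT hdiff
      (monotone_of_deriv_nonneg hdiff' fun t => ?_))
    rw [hode, sub_nonneg]
    exact rpow_le_self_of_le_one (hpos t).le (hle t) hp.le
  have hbelow : ∃ t, z t < 1 := by
    by_contra! hge
    refine hnonconst (hperz.exists_eq_const_of_antitone_deriv hT hdiff
      (antitone_of_deriv_nonpos hdiff' fun t => ?_))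
    rw [hode, sub_nonpos]
    exact self_le_rpow_of_one_le (hge t) hp.le
  obtain ⟨a, ha⟩ := habove
  obtain ⟨b, hb⟩ := hbelow
  obtain ⟨c, hc⟩ := intermediate_value_univ b a hC2.continuous ⟨hb.le, ha.le⟩
  exact ⟨hc ▸ hperz.infinite_setOf_eq hT.ne', ⟨a, ha⟩, ⟨b, hb⟩⟩

theorem stmt9 (p : ℝ) (hp : 1 < p) (z : ℝ → ℝ) (hC2 : ContDiff ℝ 2 z)
    (hbdd : ∃ M, ∀ t, |z t| ≤ M) (hpos : ∀ t, 0 < z t)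
    (hnonconst : ¬ ∃ k, ∀ t, z t = k)
    (hper : ∃ T > 0, Function.Periodic z T)
    (hode : ∀ t, deriv (deriv z) t = z t - z t ^ p) :
    {t : ℝ | z t = 1}.Infinite ∧ (∃ t, 1 < z t) ∧ (∃ t, z t < 1) :=
  stmt9_general p hp z hC2 hpos hnonconst hper hode
end

section
/- Let c > 0 and p > 1, and suppose u : ℝ² → ℝ is a bounded positive C² solution of -c·Δu + u - u^p = 0 on ℝ² such that ∂u/∂x₂ ≤ 0 everywhere and ∂u/∂x₂ is bounded, and u has the one-dimensional symmetry u(x) = U(a·x) for some unit vector a ∈ ℝ² and some C² function U : ℝ → ℝ. If a₂ ≠ 0 then u is constant, equal to 0 or 1. -/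
/-!
Along the direction `a`, the PDE becomes the ODE `c (a₁² + a₂²) U'' = U - U^p`, and
`∂u/∂x₂ ≤ 0` with `a₂ ≠ 0` makes `U` monotone; being bounded and positive, `U` has limits at `±∞`.
The energy `E = c/2 U'² - G(U)`, `G(s) = s²/2 - s^(p+1)/(p+1)`, is conserved, so `U'²`
converges at each end; as `U` converges and `U'` has a sign, the limit of `U'` is `0`, and then
so is the limit of `U''`. Hence both limits are equilibria `0` or `1`, with the same value of `G`.
Since `G 0 = 0 ≠ G 1`, both limits are equal, and positivity makes them `1`.
-/

open Real Filter Topology Set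

theorem eq_zero_of_tendsto_of_tendsto_deriv {f : ℝ → ℝ} {L m : ℝ}
    (hf : Differentiable ℝ f) (hL : Tendsto f atTop (𝓝 L)) (hm : Tendsto (deriv f) atTop (𝓝 m)) :
    m = 0 := by
  have hslope : ∀ t : ℝ, ∃ ξ ∈ Ioo t (t + 1), deriv f ξ = f (t + 1) - f t := fun t => by
    simpa using
      exists_deriv_eq_slope f (lt_add_one t) hf.continuous.continuousOn hf.differentiableOn
  choose ξ hξ hξ_eq using hslope
  have hξ_top : Tendsto ξ atTop atTop := tendsto_atTop_mono (fun t => (hξ t).1.le) tendsto_id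
  have hdiff : Tendsto (fun t => f (t + 1) - f t) atTop (𝓝 (L - L)) :=
    (hL.comp (tendsto_atTop_add_const_right _ 1 tendsto_id)).sub hL
  rw [sub_self] at hdiff
  exact tendsto_nhds_unique ((hm.comp hξ_top).congr hξ_eq) hdiff

theorem tendsto_deriv_zero_of_tendsto_deriv_sq {f : ℝ → ℝ} {L k : ℝ} (hf : Differentiable ℝ f)
    (hsign : (∀ t, 0 ≤ deriv f t) ∨ (∀ t, deriv f t ≤ 0)) (hL : Tendsto f atTop (𝓝 L))
    (hk : Tendsto (fun t => deriv f t ^ 2) atTop (𝓝 k)) : Tendsto (deriv f) atTop (𝓝 0) := by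
  rcases hsign with hnonneg | hnonpos
  · have hd : Tendsto (deriv f) atTop (𝓝 √k) := hk.sqrt.congr fun t => sqrt_sq (hnonneg t)
    rwa [eq_zero_of_tendsto_of_tendsto_deriv hf hL hd] at hd
  · have hd : Tendsto (deriv f) atTop (𝓝 (-√k)) := hk.sqrt.neg.congr fun t => by
      rw [sqrt_sq_eq_abs, abs_of_nonpos (hnonpos t), neg_neg]
    rwa [eq_zero_of_tendsto_of_tendsto_deriv hf hL hd] at hd

theorem deriv_comp_mul_add (f : ℝ → ℝ) (k b : ℝ) :
    deriv (fun s => f (k * s + b)) = fun s => k * deriv f (k * s + b) := by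
  funext s
  simpa [deriv_comp_add_const] using deriv_comp_mul_left k (fun y => f (y + b)) s

theorem deriv_deriv_comp_mul_add (f : ℝ → ℝ) (k b s : ℝ) :
    deriv (deriv fun s => f (k * s + b)) s = k ^ 2 * deriv (deriv f) (k * s + b) := by
  rw [deriv_comp_mul_add, deriv_const_mul_field', deriv_comp_mul_add]
  ring

theorem deriv_deriv_comp_neg (f : ℝ → ℝ) (t : ℝ) :
    deriv (deriv fun t => f (-t)) t = deriv (deriv f) (-t) := by
  have h : (deriv fun t => f (-t)) = -fun t => deriv f (-t) := funext fun t => deriv_comp_neg f t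
  rw [h, deriv.neg, deriv_comp_neg, neg_neg]

namespace ScalarFieldODE

variable {c p : ℝ} {U : ℝ → ℝ}

noncomputable def potential (p s : ℝ) : ℝ := s ^ 2 / 2 - s ^ (p + 1) / (p + 1)

noncomputable def energy (c p : ℝ) (U : ℝ → ℝ) (t : ℝ) : ℝ :=
  c / 2 * deriv U t ^ 2 - potential p (U t)

theorem hasDerivAt_potential (hp : 0 ≤ p) (s : ℝ) : HasDerivAt (potential p) (s - s ^ p) s := by
  have h := ((hasDerivAt_pow 2 s).div_const 2).sub
    ((hasDerivAt_rpow_const (x := s) (p := p + 1) (Or.inr (by linarith))).div_const (p + 1))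
  refine h.congr_deriv ?_
  rw [add_sub_cancel_right]
  field_simp
  ring

theorem potential_zero (hp : 0 ≤ p) : potential p 0 = 0 := by
  simp [potential, zero_rpow (by linarith : p + 1 ≠ 0)]

theorem potential_one : potential p 1 = 1 / 2 - 1 / (p + 1) := by
  simp [potential]

theorem energy_comp_neg (t : ℝ) : energy c p (fun t => U (-t)) t = energy c p U (-t) := by
  simp only [energy, deriv_comp_neg, neg_sq]

section Solution

variable (hp : 0 ≤ p) (hU : ContDiff ℝ 2 U)
  (hode : ∀ t, c * deriv (deriv U) t = U t - U t ^ p)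
include hp hU hode

theorem hasDerivAt_energy (t : ℝ) : HasDerivAt (energy c p U) 0 t := by
  have h := ((hU.differentiable_deriv_two t).hasDerivAt.pow 2).const_mul (c / 2) |>.sub
    ((hasDerivAt_potential hp (U t)).comp t (hU.differentiable two_ne_zero t).hasDerivAt)
  refine h.congr_deriv ?_
  rw [← hode t]
  push_cast
  ring

theorem energy_eq (t s : ℝ) : energy c p U t = energy c p U s :=
  is_const_of_deriv_eq_zero (fun t => (hasDerivAt_energy hp hU hode t).differentiableAt)
    (fun t => (hasDerivAt_energy hp hU hode t).deriv) t s

theorem rpow_eq_self_and_energy_eq_of_tendsto_atTop (hc : 0 < c)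
    (hsign : (∀ t, 0 ≤ deriv U t) ∨ (∀ t, deriv U t ≤ 0)) {L : ℝ}
    (hL : Tendsto U atTop (𝓝 L)) : L ^ p = L ∧ energy c p U 0 = -potential p L := by
  have hG : Tendsto (fun t => potential p (U t)) atTop (𝓝 (potential p L)) :=
    (hasDerivAt_potential hp L).continuousAt.tendsto.comp hL
  have hsq : Tendsto (fun t => deriv U t ^ 2) atTop
      (𝓝 (2 / c * (energy c p U 0 + potential p L))) :=
    ((hG.const_add _).const_mul _).congr fun t => by
      rw [energy_eq hp hU hode 0 t, energy]
      field_simp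
      ring
  have hU' := tendsto_deriv_zero_of_tendsto_deriv_sq (hU.differentiable two_ne_zero) hsign hL hsq
  constructor
  · have hU'' : Tendsto (deriv (deriv U)) atTop (𝓝 ((L - L ^ p) / c)) :=
      ((hL.sub (hL.rpow_const (Or.inr hp))).div_const c).congr fun t => by
        rw [← hode t]
        field_simp
    have h := eq_zero_of_tendsto_of_tendsto_deriv hU.differentiable_deriv_two hU' hU''
    field_simp at h
    linarith
  · have hE : Tendsto (energy c p U) atTop (𝓝 (c / 2 * 0 ^ 2 - potential p L)) :=
      ((hU'.pow 2).const_mul _).sub hG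
    have h := tendsto_nhds_unique (tendsto_const_nhds.congr (energy_eq hp hU hode 0)) hE
    simpa using h

end Solution

theorem ode_comp_neg (hode : ∀ t, c * deriv (deriv U) t = U t - U t ^ p) (t : ℝ) :
    c * deriv (deriv fun t => U (-t)) t = U (-t) - U (-t) ^ p := by
  rw [deriv_deriv_comp_neg, hode]

theorem eq_zero_or_eq_one_of_rpow_eq_self {L : ℝ} (hp : p ≠ 1) (hL : 0 ≤ L) (h : L ^ p = L) :
    L = 0 ∨ L = 1 := by
  rcases hL.eq_or_lt with hL | hL
  · exact Or.inl hL.symm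
  · by_contra! hne
    nth_rw 2 [← rpow_one L] at h
    exact hp ((rpow_right_inj hL hne.2).mp h)

theorem eq_one_of_deriv_nonpos (hc : 0 < c) (hp : 1 < p) (hU : ContDiff ℝ 2 U)
    (hode : ∀ t, c * deriv (deriv U) t = U t - U t ^ p) (hpos : ∀ t, 0 < U t)
    (hbdd : BddAbove (range U)) (hanti : ∀ t, deriv U t ≤ 0) (t : ℝ) : U t = 1 := by
  have hU_anti : Antitone U := antitone_of_deriv_nonpos (hU.differentiable two_ne_zero) hanti
  have hbdd_below : BddBelow (range U) := ⟨0, by rintro _ ⟨t, rfl⟩; exact (hpos t).le⟩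
  obtain ⟨hfix_top, hE_top⟩ := rpow_eq_self_and_energy_eq_of_tendsto_atTop (by linarith) hU hode
    hc (Or.inr hanti) (tendsto_atTop_ciInf hU_anti hbdd_below)
  obtain ⟨hfix_bot, hE_bot⟩ := rpow_eq_self_and_energy_eq_of_tendsto_atTop
    (U := fun t => U (-t)) (by linarith) (hU.comp contDiff_neg) (ode_comp_neg hode) hc
    (Or.inl fun t => by rw [deriv_comp_neg, neg_nonneg]; exact hanti (-t))
    ((tendsto_atBot_ciSup hU_anti hbdd).comp tendsto_neg_atTop_atBot)
  rw [energy_comp_neg, neg_zero, hE_top, neg_inj] at hE_bot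
  have hsup_pos : 0 < ⨆ t, U t := (hpos 0).trans_le (le_ciSup hbdd 0)
  have hsup : (⨆ t, U t) = 1 :=
    (eq_zero_or_eq_one_of_rpow_eq_self hp.ne' hsup_pos.le hfix_bot).resolve_left hsup_pos.ne'
  have hinf : (⨅ t, U t) = 1 := by
    refine (eq_zero_or_eq_one_of_rpow_eq_self hp.ne' (le_ciInf fun t => (hpos t).le)
      hfix_top).resolve_left fun h0 => ?_
    rw [h0, hsup, potential_zero (by linarith), potential_one] at hE_bot
    have : 1 / (p + 1) < 1 / 2 := by gcongr; linarith
    linarith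
  exact le_antisymm (hsup ▸ le_ciSup hbdd t) (hinf ▸ ciInf_le hbdd_below t)

theorem eq_one_of_deriv_sign (hc : 0 < c) (hp : 1 < p) (hU : ContDiff ℝ 2 U)
    (hode : ∀ t, c * deriv (deriv U) t = U t - U t ^ p) (hpos : ∀ t, 0 < U t)
    (hbdd : BddAbove (range U)) (hsign : (∀ t, 0 ≤ deriv U t) ∨ (∀ t, deriv U t ≤ 0))
    (t : ℝ) : U t = 1 := by
  rcases hsign with hmono | hanti
  · simpa using eq_one_of_deriv_nonpos (U := fun t => U (-t)) hc hp (hU.comp contDiff_neg)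
      (ode_comp_neg hode) (fun t => hpos (-t)) (hbdd.mono (range_comp_subset_range _ U))
      (fun t => by rw [deriv_comp_neg, neg_nonpos]; exact hmono (-t)) (-t)
  · exact eq_one_of_deriv_nonpos hc hp hU hode hpos hbdd hanti t

end ScalarFieldODE

theorem stmt10_general (c p : ℝ) (hc : 0 < c) (hp : 1 < p)
    (u : ℝ × ℝ → ℝ)
    (hbdd : ∃ M, ∀ x, |u x| ≤ M) (hpos : ∀ x, 0 < u x)
    (heq : ∀ x : ℝ × ℝ,
      -c * (deriv (deriv (fun s => u (s, x.2))) x.1 +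
            deriv (deriv (fun s => u (x.1, s))) x.2) + u x - u x ^ p = 0)
    (hmono : ∀ x : ℝ × ℝ, deriv (fun s => u (x.1, s)) x.2 ≤ 0)
    (a : ℝ × ℝ) (U : ℝ → ℝ) (hU : ContDiff ℝ 2 U)
    (hsym : ∀ x : ℝ × ℝ, u x = U (a.1 * x.1 + a.2 * x.2))
    (ha2 : a.2 ≠ 0) :
    (∀ x, u x = 0) ∨ (∀ x, u x = 1) := by
  have hsurj : ∀ t, ∃ x : ℝ × ℝ, a.1 * x.1 + a.2 * x.2 = t := fun t =>
    ⟨(0, t / a.2), by field_simp; ring⟩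
  have hslice₁ (x : ℝ × ℝ) : (fun s => u (s, x.2)) = fun s => U (a.1 * s + a.2 * x.2) :=
    funext fun s => hsym (s, x.2)
  have hslice₂ (x : ℝ × ℝ) : (fun s => u (x.1, s)) = fun s => U (a.2 * s + a.1 * x.1) :=
    funext fun s => (hsym (x.1, s)).trans (by ring_nf)
  have hode (t : ℝ) : c * (a.1 ^ 2 + a.2 ^ 2) * deriv (deriv U) t = U t - U t ^ p := by
    obtain ⟨x, rfl⟩ := hsurj t
    have h := heq x
    rw [hslice₁, hslice₂, deriv_deriv_comp_mul_add, deriv_deriv_comp_mul_add, hsym,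
      add_comm (a.2 * x.2)] at h
    linear_combination -h
  have hdir (t : ℝ) : a.2 * deriv U t ≤ 0 := by
    obtain ⟨x, rfl⟩ := hsurj t
    simpa only [hslice₂, deriv_comp_mul_add, add_comm (a.2 * x.2)] using hmono x
  obtain ⟨M, hM⟩ := hbdd
  have hU_one := ScalarFieldODE.eq_one_of_deriv_sign (by positivity) hp hU hode
    (fun t => by obtain ⟨x, rfl⟩ := hsurj t; exact hsym x ▸ hpos x)
    ⟨M, by
      rintro _ ⟨t, rfl⟩
      obtain ⟨x, rfl⟩ := hsurj t
      exact hsym x ▸ (le_abs_self _).trans (hM x)⟩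
    (ha2.lt_or_gt.imp (fun h t => nonneg_of_mul_nonpos_right (hdir t) h)
      (fun h t => nonpos_of_mul_nonpos_right (hdir t) h))
  exact Or.inr fun x => (hsym x).trans (hU_one _)

theorem stmt10 (c p : ℝ) (hc : 0 < c) (hp : 1 < p)
    (u : ℝ × ℝ → ℝ) (hC2 : ContDiff ℝ 2 u)
    (hbdd : ∃ M, ∀ x, |u x| ≤ M) (hpos : ∀ x, 0 < u x)
    (heq : ∀ x : ℝ × ℝ,
      -c * (deriv (deriv (fun s => u (s, x.2))) x.1 +
            deriv (deriv (fun s => u (x.1, s))) x.2) + u x - u x ^ p = 0)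
    (hmono : ∀ x : ℝ × ℝ, deriv (fun s => u (x.1, s)) x.2 ≤ 0)
    (hgradbdd : ∃ M, ∀ x : ℝ × ℝ, |deriv (fun s => u (x.1, s)) x.2| ≤ M)
    (a : ℝ × ℝ) (ha : ‖a‖ = 1) (U : ℝ → ℝ) (hU : ContDiff ℝ 2 U)
    (hsym : ∀ x : ℝ × ℝ, u x = U (a.1 * x.1 + a.2 * x.2))
    (ha2 : a.2 ≠ 0) :
    (∀ x, u x = 0) ∨ (∀ x, u x = 1) :=
  stmt10_general c p hc hp u hbdd hpos heq hmono a U hU hsym ha2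
end
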